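/- arXiv:2605.26282 — 3 statements merged into one kernel-verified Lean document; each statement's English description precedes it below -/
import Mathlib

section
/- Let π and β be policies with β(a|z) > 0 for all (z,a), let ρ be an initial probability mass function on Z, and let ε ≥ 0 satisfy D_KL(π(·|z) ‖ β(·|z)) ≤ ε for all z ∈ Z. Then Σ_{z ∈ Z} |d^π(z) − d^β(z)| ≤ (γ/(1−γ)) · √(2ε). -/
open scoped BigOperators

/-- One application of the state transition matrix `P_μ` induced by policy `μpol`
to a distribution `ρ` over latent states: `(ρ P_μ)(z') = Σ_z ρ(z) Σ_a μ(a|z)·[F(z,a) = z']`. -/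
noncomputable def stepDist {Z A : Type*} [Fintype Z] [Fintype A] [DecidableEq Z]
    (F : Z × A → Z) (μpol : Z → A → ℝ) (ρ : Z → ℝ) : Z → ℝ :=
  fun z' => ∑ z : Z, ρ z * ∑ a : A, μpol z a * (if F (z, a) = z' then (1 : ℝ) else 0)

/-- Discounted occupancy distribution `d^μ(z) = (1−γ) Σ_{t} γ^t (ρ P_μ^t)(z)`. -/
noncomputable def occupancy {Z A : Type*} [Fintype Z] [Fintype A] [DecidableEq Z]
    (F : Z × A → Z) (γ : ℝ) (μpol : Z → A → ℝ) (ρ : Z → ℝ) : Z → ℝ :=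
  fun z => (1 - γ) * ∑' t : ℕ, γ ^ t * ((stepDist F μpol)^[t] ρ) z

/-- Kullback–Leibler divergence between probability mass functions on a finite
type (with the convention `0 · log 0 = 0`, automatic since `Real.log 0 = 0`). -/
noncomputable def klFin {A : Type*} [Fintype A] (p q : A → ℝ) : ℝ :=
  ∑ a : A, p a * Real.log (p a / q a)

/-!
Pinsker's inequality bounds the per-state `ℓ¹` distance between the two policies, and hence
between the rows of their transition matrices, by `δ = √(2ε)`; it follows from the pointwise
bound `3 (r - 1)² ≤ (2r + 4)(r log r - r + 1)` and Cauchy–Schwarz with weights `(p + 2q) / 3`.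
Stochastic matrices are `ℓ¹`-contractions, so after `t` steps the two state distributions are
at most `t δ` apart, and `(1 - γ) ∑ₜ γᵗ t δ = γ δ / (1 - γ)`.
-/

section LogInequality

open Set Real

lemma nonneg_of_hasDerivAt_of_sign {f f' : ℝ → ℝ} (hf : ∀ x, 0 < x → HasDerivAt f (f' x) x)
    (hf1 : f 1 = 0) (hf'_pos : ∀ x, 1 < x → 0 ≤ f' x)
    (hf'_neg : ∀ x, 0 < x → x < 1 → f' x ≤ 0) {r : ℝ} (hr : 0 < r) : 0 ≤ f r := by
  rcases le_total 1 r with h1 | h1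
  · have hmono : MonotoneOn f (Ici 1) := by
      refine monotoneOn_of_hasDerivWithinAt_nonneg (f' := f') (convex_Ici 1)
        (fun x hx => (hf x (one_pos.trans_le hx)).continuousAt.continuousWithinAt)
        (fun x hx => ?_) (fun x hx => ?_) <;> rw [interior_Ici] at hx
      · exact (hf x (one_pos.trans hx)).hasDerivWithinAt
      · exact hf'_pos x hx
    simpa [hf1] using hmono self_mem_Ici h1 h1
  · have hanti : AntitoneOn f (Icc r 1) := by
      refine antitoneOn_of_hasDerivWithinAt_nonpos (f' := f') (convex_Icc r 1)
        (fun x hx => (hf x (hr.trans_le hx.1)).continuousAt.continuousWithinAt)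
        (fun x hx => ?_) (fun x hx => ?_) <;> rw [interior_Icc] at hx
      · exact (hf x (hr.trans hx.1)).hasDerivWithinAt
      · exact hf'_neg x (hr.trans hx.1) hx.2
    simpa [hf1] using hanti (left_mem_Icc.2 h1) (right_mem_Icc.2 h1) h1

lemma monotoneOn_add_one_mul_log_sub :
    MonotoneOn (fun x => (x + 1) * log x - 2 * (x - 1)) (Ioi 0) := by
  have hderiv : ∀ x : ℝ, 0 < x →
      HasDerivAt (fun x => (x + 1) * log x - 2 * (x - 1)) (log x + x⁻¹ - 1) x := fun x hx => by
    refine ((((hasDerivAt_id x).add_const 1).mul (hasDerivAt_log hx.ne')).sub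
      (((hasDerivAt_id x).sub_const 1).const_mul 2)).congr_deriv ?_
    simp only [id]
    field_simp
    ring
  refine monotoneOn_of_hasDerivWithinAt_nonneg (f' := fun x => log x + x⁻¹ - 1) (convex_Ioi 0)
    (fun x hx => (hderiv x hx).continuousAt.continuousWithinAt) (fun x hx => ?_)
    (fun x hx => ?_) <;> rw [interior_Ioi, mem_Ioi] at hx
  · exact (hderiv x hx).hasDerivWithinAt
  · linarith [one_sub_inv_le_log_of_pos hx]

lemma three_mul_sq_sub_one_le {r : ℝ} (hr : 0 ≤ r) :
    3 * (r - 1) ^ 2 ≤ (2 * r + 4) * (r * log r - r + 1) := by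
  rcases hr.eq_or_lt with rfl | hr
  · norm_num
  have key := nonneg_of_hasDerivAt_of_sign
    (f := fun x => (2 * x + 4) * (x * log x - x + 1) - 3 * (x - 1) ^ 2)
    (f' := fun x => 4 * ((x + 1) * log x - 2 * (x - 1))) (fun x hx => ?_) (by simp)
    (fun x hx => ?_) (fun x hx hx1 => ?_) hr
  · simpa using key
  · have := (((hasDerivAt_id x).const_mul 2).add_const 4).mul
      ((((hasDerivAt_id x).mul (hasDerivAt_log hx.ne')).sub (hasDerivAt_id x)).add_const 1)
    refine (this.sub ((((hasDerivAt_id x).sub_const 1).pow 2).const_mul 3)).congr_deriv ?_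
    simp only [id, Pi.mul_apply, Pi.sub_apply, Nat.cast_ofNat]
    field_simp
    ring
  · simpa using monotoneOn_add_one_mul_log_sub (mem_Ioi.2 one_pos) (mem_Ioi.2 (one_pos.trans hx))
      hx.le
  · have := monotoneOn_add_one_mul_log_sub (mem_Ioi.2 hx) (mem_Ioi.2 one_pos) hx1.le
    norm_num at this
    linarith

lemma three_mul_sq_sub_le {p q : ℝ} (hp : 0 ≤ p) (hq : 0 < q) :
    3 * (p - q) ^ 2 ≤ 2 * (p + 2 * q) * (p * log (p / q) - p + q) := by
  obtain ⟨r, hr, rfl⟩ : ∃ r, 0 ≤ r ∧ p = q * r := ⟨p / q, div_nonneg hp hq.le, by field_simp⟩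
  rw [mul_div_cancel_left₀ r hq.ne']
  calc 3 * (q * r - q) ^ 2 = q ^ 2 * (3 * (r - 1) ^ 2) := by ring
    _ ≤ q ^ 2 * ((2 * r + 4) * (r * log r - r + 1)) :=
      mul_le_mul_of_nonneg_left (three_mul_sq_sub_one_le hr) (sq_nonneg q)
    _ = 2 * (q * r + 2 * q) * (q * r * log r - q * r + q) := by ring

end LogInequality

open Finset

theorem sum_abs_sub_le_sqrt_two_mul_klFin {A : Type*} [Fintype A] {p q : A → ℝ}
    (hp0 : ∀ a, 0 ≤ p a) (hp1 : ∑ a, p a = 1) (hq0 : ∀ a, 0 < q a) (hq1 : ∑ a, q a = 1) :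
    ∑ a, |p a - q a| ≤ √(2 * klFin p q) := by
  set f : A → ℝ := fun a => 2 * (p a * Real.log (p a / q a) - p a + q a)
  set g : A → ℝ := fun a => (p a + 2 * q a) / 3
  have hpt : ∀ a, |p a - q a| ^ 2 ≤ f a * g a := fun a => by
    rw [sq_abs]
    simp only [f, g]
    linarith [three_mul_sq_sub_le (hp0 a) (hq0 a)]
  have hg : ∀ a, 0 < g a := fun a => by simp only [g]; linarith [hp0 a, hq0 a]
  have hf : ∀ a, 0 ≤ f a := fun a =>
    nonneg_of_mul_nonneg_left ((sq_nonneg _).trans (hpt a)) (hg a)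
  have hf_sum : ∑ a, f a = 2 * klFin p q := by
    simp only [f, klFin, ← mul_sum, sum_add_distrib, sum_sub_distrib, hp1, hq1]
    ring
  have hg_sum : ∑ a, g a = 1 := by
    simp only [g, ← sum_div, sum_add_distrib, ← mul_sum, hp1, hq1]
    norm_num
  have hcs := sum_sq_le_sum_mul_sum_of_sq_le_mul univ (fun a _ => hf a) (fun a _ => (hg a).le)
    (fun a _ => hpt a)
  rw [hf_sum, hg_sum, mul_one] at hcs
  exact (le_abs_self _).trans (Real.abs_le_sqrt hcs)

namespace Matrix

lemma sum_abs_vecMul_le {m n : Type*} [Fintype m] [Fintype n] (M : Matrix m n ℝ) (v : m → ℝ) :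
    ∑ j, |(v ᵥ* M) j| ≤ ∑ i, |v i| * ∑ j, |M i j| := by
  calc ∑ j, |(v ᵥ* M) j| ≤ ∑ j, ∑ i, |v i| * |M i j| := by
        gcongr with j
        simpa only [vecMul, dotProduct, abs_mul] using
          abs_sum_le_sum_abs (fun i => v i * M i j) univ
    _ = ∑ i, |v i| * ∑ j, |M i j| := by simp only [mul_sum]; exact sum_comm

variable {n : Type*} [Fintype n] [DecidableEq n]

lemma sum_abs_vecMul_le_of_mem_rowStochastic {M : Matrix n n ℝ} (hM : M ∈ rowStochastic ℝ n)
    (v : n → ℝ) : ∑ j, |(v ᵥ* M) j| ≤ ∑ i, |v i| := by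
  refine (sum_abs_vecMul_le M v).trans_eq (sum_congr rfl fun i _ => ?_)
  simp_rw [abs_of_nonneg (nonneg_of_mem_rowStochastic hM), sum_row_of_mem_rowStochastic hM,
    mul_one]

lemma vecMul_mem_stdSimplex {M : Matrix n n ℝ} (hM : M ∈ rowStochastic ℝ n) {v : n → ℝ}
    (hv : v ∈ stdSimplex ℝ n) : v ᵥ* M ∈ stdSimplex ℝ n :=
  ⟨nonneg_vecMul_of_mem_rowStochastic hM hv.1, by
    simpa [dotProduct] using vecMul_dotProduct_one_eq_one_rowStochastic hM
      (by simpa [dotProduct] using hv.2)⟩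

lemma sum_abs_vecMul_pow_sub_le {M N : Matrix n n ℝ} (hM : M ∈ rowStochastic ℝ n)
    (hN : N ∈ rowStochastic ℝ n) {δ : ℝ} (hMN : ∀ i, ∑ j, |M i j - N i j| ≤ δ) {v : n → ℝ}
    (hv : v ∈ stdSimplex ℝ n) (t : ℕ) :
    ∑ j, |(v ᵥ* M ^ t) j - (v ᵥ* N ^ t) j| ≤ t * δ := by
  induction t with
  | zero => simp
  | succ t ih =>
    have hsplit : v ᵥ* M ^ (t + 1) - v ᵥ* N ^ (t + 1) =
        (v ᵥ* M ^ t - v ᵥ* N ^ t) ᵥ* M + v ᵥ* N ^ t ᵥ* (M - N) := by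
      rw [pow_succ, pow_succ, ← vecMul_vecMul, ← vecMul_vecMul, sub_vecMul, vecMul_sub]
      abel
    have hvN := vecMul_mem_stdSimplex (pow_mem hN t) hv
    have hdrift : ∑ j, |(v ᵥ* N ^ t ᵥ* (M - N)) j| ≤ δ :=
      calc ∑ j, |(v ᵥ* N ^ t ᵥ* (M - N)) j| ≤ ∑ i, |(v ᵥ* N ^ t) i| * δ :=
            (sum_abs_vecMul_le _ _).trans (sum_le_sum fun i _ => by gcongr; exact hMN i)
        _ = δ := by simp_rw [abs_of_nonneg (hvN.1 _), ← sum_mul, hvN.2, one_mul]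
    calc ∑ j, |(v ᵥ* M ^ (t + 1)) j - (v ᵥ* N ^ (t + 1)) j|
        ≤ ∑ j, (|((v ᵥ* M ^ t - v ᵥ* N ^ t) ᵥ* M) j| + |(v ᵥ* N ^ t ᵥ* (M - N)) j|) := by
          gcongr with j
          rw [← Pi.sub_apply, hsplit]
          exact abs_add_le _ _
      _ ≤ t * δ + δ := by
          rw [sum_add_distrib]
          gcongr
          exact (sum_abs_vecMul_le_of_mem_rowStochastic hM _).trans ih
      _ = (t + 1 : ℕ) * δ := by push_cast; ring

end Matrix

section Policy

open Matrix

variable {Z A : Type*} [Fintype Z] [Fintype A] [DecidableEq Z]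

lemma sum_sum_mul_ite_eq (w : A → ℝ) (g : A → Z) :
    ∑ z, ∑ a, w a * (if g a = z then 1 else 0) = ∑ a, w a := by
  rw [sum_comm]
  simp

variable (F : Z × A → Z)

def transitionMatrix (μ : Z → A → ℝ) : Matrix Z Z ℝ :=
  of fun z z' => ∑ a, μ z a * if F (z, a) = z' then 1 else 0

lemma stepDist_eq_vecMul (μ : Z → A → ℝ) (ρ : Z → ℝ) :
    stepDist F μ ρ = ρ ᵥ* transitionMatrix F μ :=
  rfl

lemma iterate_stepDist_eq_vecMul_pow (μ : Z → A → ℝ) (ρ : Z → ℝ) (t : ℕ) :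
    (stepDist F μ)^[t] ρ = ρ ᵥ* transitionMatrix F μ ^ t := by
  induction t with
  | zero => simp
  | succ t ih =>
    rw [Function.iterate_succ_apply', ih, stepDist_eq_vecMul, vecMul_vecMul, pow_succ]

lemma transitionMatrix_mem_rowStochastic {μ : Z → A → ℝ} (hμ0 : ∀ z a, 0 ≤ μ z a)
    (hμ1 : ∀ z, ∑ a, μ z a = 1) : transitionMatrix F μ ∈ rowStochastic ℝ Z :=
  mem_rowStochastic_iff_sum.2
    ⟨fun z z' => sum_nonneg fun a _ => mul_nonneg (hμ0 z a) (by positivity),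
      fun z => (sum_sum_mul_ite_eq _ _).trans (hμ1 z)⟩

lemma sum_abs_transitionMatrix_sub_le (μ ν : Z → A → ℝ) (z : Z) :
    ∑ z', |transitionMatrix F μ z z' - transitionMatrix F ν z z'| ≤ ∑ a, |μ z a - ν z a| := by
  calc ∑ z', |transitionMatrix F μ z z' - transitionMatrix F ν z z'|
      = ∑ z', |∑ a, (μ z a - ν z a) * if F (z, a) = z' then 1 else 0| := by
        simp only [transitionMatrix, of_apply, ← sum_sub_distrib, sub_mul]
    _ ≤ ∑ z', ∑ a, |μ z a - ν z a| * if F (z, a) = z' then 1 else 0 := by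
        gcongr with z'
        refine (abs_sum_le_sum_abs _ _).trans_eq (sum_congr rfl fun a _ => ?_)
        rw [abs_mul]
        split_ifs <;> simp
    _ = ∑ a, |μ z a - ν z a| := sum_sum_mul_ite_eq _ _

end Policy

lemma sum_abs_tsum_le_tsum_sum_abs {ι : Type*} [Fintype ι] {f : ℕ → ι → ℝ}
    (hf : ∀ i, Summable fun t => |f t i|) : ∑ i, |∑' t, f t i| ≤ ∑' t, ∑ i, |f t i| := by
  rw [Summable.tsum_finsetSum fun i _ => hf i]
  exact sum_le_sum fun i _ => by
    simpa only [Real.norm_eq_abs] using norm_tsum_le_tsum_norm (f := fun t => f t i) (hf i)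

lemma summable_geometric_mul_of_mem_stdSimplex {ι : Type*} [Fintype ι] {γ : ℝ} (hγ0 : 0 ≤ γ)
    (hγ1 : γ < 1) {x : ℕ → ι → ℝ} (hx : ∀ t, x t ∈ stdSimplex ℝ ι) (i : ι) :
    Summable fun t => γ ^ t * x t i :=
  (summable_geometric_of_lt_one hγ0 hγ1).of_nonneg_of_le
    (fun t => mul_nonneg (pow_nonneg hγ0 t) ((hx t).1 i))
    (fun t => mul_le_of_le_one_right (pow_nonneg hγ0 t) (mem_Icc_of_mem_stdSimplex (hx t) i).2)

lemma sum_abs_discounted_sub_le {ι : Type*} [Fintype ι] {γ δ : ℝ} (hγ0 : 0 ≤ γ) (hγ1 : γ < 1)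
    {x y : ℕ → ι → ℝ} (hx : ∀ t, x t ∈ stdSimplex ℝ ι) (hy : ∀ t, y t ∈ stdSimplex ℝ ι)
    (hxy : ∀ t, ∑ i, |x t i - y t i| ≤ t * δ) :
    ∑ i, |(1 - γ) * ∑' t, γ ^ t * x t i - (1 - γ) * ∑' t, γ ^ t * y t i| ≤ γ / (1 - γ) * δ := by
  have hγ : 0 < 1 - γ := sub_pos.2 hγ1
  have hgeom : HasSum (fun t : ℕ => t * γ ^ t * δ) (γ / (1 - γ) ^ 2 * δ) :=
    (hasSum_coe_mul_geometric_of_norm_lt_one (by rwa [Real.norm_of_nonneg hγ0])).mul_right δ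
  have hbound : ∀ t, ∑ i, |γ ^ t * (x t i - y t i)| ≤ t * γ ^ t * δ := fun t => by
    simp_rw [abs_mul, abs_of_nonneg (pow_nonneg hγ0 t), ← mul_sum]
    rw [mul_comm (t : ℝ), mul_assoc]
    exact mul_le_mul_of_nonneg_left (hxy t) (pow_nonneg hγ0 t)
  have hsummable : ∀ i, Summable fun t => |γ ^ t * (x t i - y t i)| := fun i =>
    hgeom.summable.of_nonneg_of_le (fun t => abs_nonneg _)
      (fun t => (single_le_sum (fun j _ => abs_nonneg _) (mem_univ i)).trans (hbound t))
  calc ∑ i, |(1 - γ) * ∑' t, γ ^ t * x t i - (1 - γ) * ∑' t, γ ^ t * y t i|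
      = (1 - γ) * ∑ i, |∑' t, γ ^ t * (x t i - y t i)| := by
        rw [mul_sum]
        refine sum_congr rfl fun i _ => ?_
        rw [← mul_sub, ← (summable_geometric_mul_of_mem_stdSimplex hγ0 hγ1 hx i).tsum_sub
          (summable_geometric_mul_of_mem_stdSimplex hγ0 hγ1 hy i), abs_mul, abs_of_pos hγ]
        simp_rw [mul_sub]
    _ ≤ (1 - γ) * ∑' t, ∑ i, |γ ^ t * (x t i - y t i)| := by
        gcongr
        exact sum_abs_tsum_le_tsum_sum_abs hsummable
    _ ≤ (1 - γ) * (γ / (1 - γ) ^ 2 * δ) := by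
        gcongr
        exact hasSum_le hbound (summable_sum fun i _ => hsummable i).hasSum hgeom
    _ = γ / (1 - γ) * δ := by
        field_simp

theorem occupancy_tv_le_sqrt_kl_general
    {Z A : Type*} [Fintype Z] [Fintype A] [DecidableEq Z]
    (F : Z × A → Z) (γ : ℝ) (hγ0 : 0 < γ) (hγ1 : γ < 1)
    (π β : Z → A → ℝ)
    (hπ0 : ∀ z a, 0 ≤ π z a) (hπ1 : ∀ z, ∑ a : A, π z a = 1)
    (hβ0 : ∀ z a, 0 < β z a) (hβ1 : ∀ z, ∑ a : A, β z a = 1)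
    (ρ : Z → ℝ) (hρ0 : ∀ z, 0 ≤ ρ z) (hρ1 : ∑ z : Z, ρ z = 1)
    (ε : ℝ) (hKL : ∀ z, klFin (π z) (β z) ≤ ε) :
    ∑ z : Z, |occupancy F γ π ρ z - occupancy F γ β ρ z| ≤
      (γ / (1 - γ)) * Real.sqrt (2 * ε) := by
  have hPπ := transitionMatrix_mem_rowStochastic F hπ0 hπ1
  have hPβ := transitionMatrix_mem_rowStochastic F (fun z a => (hβ0 z a).le) hβ1
  have hρ : ρ ∈ stdSimplex ℝ Z := ⟨hρ0, hρ1⟩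
  have hrows : ∀ z, ∑ z', |transitionMatrix F π z z' - transitionMatrix F β z z'| ≤ √(2 * ε) :=
    fun z => (sum_abs_transitionMatrix_sub_le F π β z).trans <|
      (sum_abs_sub_le_sqrt_two_mul_klFin (hπ0 z) (hπ1 z) (hβ0 z) (hβ1 z)).trans <|
        Real.sqrt_le_sqrt (by linarith [hKL z])
  simp only [occupancy, iterate_stepDist_eq_vecMul_pow]
  exact sum_abs_discounted_sub_le hγ0.le hγ1
    (fun t => Matrix.vecMul_mem_stdSimplex (pow_mem hPπ t) hρ)
    (fun t => Matrix.vecMul_mem_stdSimplex (pow_mem hPβ t) hρ)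
    (Matrix.sum_abs_vecMul_pow_sub_le hPπ hPβ hrows hρ)

/-- if `D_KL(π(·|z) ‖ β(·|z)) ≤ ε` for all `z`, then
`Σ_z |d^π(z) − d^β(z)| ≤ (γ/(1−γ)) · √(2ε)`. -/
theorem occupancy_tv_le_sqrt_kl
    {Z A : Type*} [Fintype Z] [Fintype A] [Nonempty Z] [Nonempty A] [DecidableEq Z]
    (F : Z × A → Z) (R : Z × A → ℝ) (γ : ℝ) (hγ0 : 0 < γ) (hγ1 : γ < 1)
    (π β : Z → A → ℝ)
    (hπ0 : ∀ z a, 0 ≤ π z a) (hπ1 : ∀ z, ∑ a : A, π z a = 1)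
    (hβ0 : ∀ z a, 0 < β z a) (hβ1 : ∀ z, ∑ a : A, β z a = 1)
    (ρ : Z → ℝ) (hρ0 : ∀ z, 0 ≤ ρ z) (hρ1 : ∑ z : Z, ρ z = 1)
    (ε : ℝ) (hε : 0 ≤ ε) (hKL : ∀ z, klFin (π z) (β z) ≤ ε) :
    ∑ z : Z, |occupancy F γ π ρ z - occupancy F γ β ρ z| ≤
      (γ / (1 - γ)) * Real.sqrt (2 * ε) :=
  occupancy_tv_le_sqrt_kl_general F γ hγ0 hγ1 π β hπ0 hπ1 hβ0 hβ1 ρ hρ0 hρ1 ε hKL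
end

section
/- Let π and β be policies with β(a|z) > 0 for all (z,a), let ρ be an initial probability mass function on Z, and let Q̂ : Z × A → ℝ. Suppose |Q^β(z,a)| ≤ Q_max for all (z,a), |Q^β(z,a) − Q̂(z,a)| ≤ δ for all (z,a), and D_KL(π(·|z) ‖ β(·|z)) ≤ ε for all z ∈ Z. Define the estimated surrogate objectives Ĵ_β(π) = Σ_{z ∈ Z} d^β(z) · Σ_{a ∈ A} π(a|z) · Q̂(z,a) and Ĵ(β) = Σ_{z ∈ Z} d^β(z) · Σ_{a ∈ A} β(a|z) · Q̂(z,a). Then J(π) − J(β) ≥ (1/(1−γ)) · (Ĵ_β(π) − Ĵ(β)) − (2γ·Q_max/(1−γ)²) · ε − (2/(1−γ)) · δ. -/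
/-!
Write `D = V^π - V^β`. Subtracting the two Bellman equations gives
`D = Σ_a (π - β) Q^π + γ P_β D`, so `D` is the `β`-value of the reward
`g z = Σ_a (π - β)(z, a) Q^π(z, a)`, and telescoping the discounted Bellman equation along the
`β`-chain started at `ρ` yields `(1 - γ) (J(π) - J(β)) = Σ_z d^β(z) g(z)`.
Split `Q^π = Q̂ + (Q^β - Q̂) + γ D ∘ F`: the last two terms are paid for with the total variation
`Σ_a |π - β|`, which is at most `2` and, by Pinsker's inequality, at most `√(2ε)`;
the same Bellman argument under `π` bounds `|D|` by `Qmax √(2ε) / (1 - γ)`.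
-/

open scoped BigOperators

open Finset InformationTheory

lemma abs_sum_mul_le {ι : Type*} [Fintype ι] (w : ι → ℝ) {f : ι → ℝ} {c : ℝ}
    (hf : ∀ i, |f i| ≤ c) : |∑ i, w i * f i| ≤ (∑ i, |w i|) * c := by
  rw [sum_mul]
  refine (abs_sum_le_sum_abs _ _).trans (sum_le_sum fun i _ => ?_)
  rw [abs_mul]
  exact mul_le_mul_of_nonneg_left (hf i) (abs_nonneg _)

lemma sum_mul_sub_le_of_mem_stdSimplex {ι : Type*} [Fintype ι] {d x y : ι → ℝ} {c : ℝ}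
    (hd : d ∈ stdSimplex ℝ ι) (h : ∀ i, x i - c ≤ y i) :
    ∑ i, d i * x i - c ≤ ∑ i, d i * y i :=
  calc ∑ i, d i * x i - c = ∑ i, d i * (x i - c) := by
        simp only [mul_sub, sum_sub_distrib, ← sum_mul, hd.2, one_mul]
    _ ≤ ∑ i, d i * y i := sum_le_sum fun i _ => mul_le_mul_of_nonneg_left (h i) (hd.1 i)

lemma sum_abs_sub_le_two {ι : Type*} [Fintype ι] {p q : ι → ℝ} (hp : p ∈ stdSimplex ℝ ι)
    (hq : q ∈ stdSimplex ℝ ι) : ∑ i, |p i - q i| ≤ 2 :=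
  calc ∑ i, |p i - q i| ≤ ∑ i, (|p i| + |q i|) := sum_le_sum fun i _ => abs_sub _ _
    _ = 2 := by
        simp only [abs_of_nonneg (hp.1 _), abs_of_nonneg (hq.1 _), sum_add_distrib, hp.2, hq.2]
        norm_num

theorem tsum_sub_succ {b : ℕ → ℝ} (hb : Summable b) : ∑' t, (b t - b (t + 1)) = b 0 := by
  rw [hb.tsum_sub ((summable_nat_add_iff 1).2 hb), hb.tsum_eq_zero_add, add_sub_cancel_right]

-- The "Pinsker bound" `(t - 1) / t + 3 (t - 1)² / (2 t (t + 2))` on `log t` is the pointwise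
-- Pinsker bound `3 (t - 1)² / (2 (t + 2)) ≤ klFun t` divided by `t`.
lemma hasDerivAt_log_sub_pinskerBound {s : ℝ} (hs : 0 < s) :
    HasDerivAt (fun s => Real.log s - ((s - 1) / s + 3 * (s - 1) ^ 2 / (2 * s * (s + 2))))
      ((s - 1) ^ 3 / (s ^ 2 * (s + 2) ^ 2)) s := by
  have hs2 : 2 * s * (s + 2) ≠ 0 := by positivity
  have h := (Real.hasDerivAt_log hs.ne').sub ((((hasDerivAt_id s).sub_const 1).div (hasDerivAt_id s)
    hs.ne').add (((((hasDerivAt_id s).sub_const 1).pow 2).const_mul 3).div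
      (((hasDerivAt_id s).const_mul 2).mul ((hasDerivAt_id s).add_const 2)) hs2))
  refine h.congr_deriv ?_
  simp only [id, Pi.mul_apply, Pi.pow_apply]
  field_simp
  ring

lemma pinskerBound_le_log {t : ℝ} (ht : 0 < t) :
    (t - 1) / t + 3 * (t - 1) ^ 2 / (2 * t * (t + 2)) ≤ Real.log t := by
  set φ := fun s => Real.log s - ((s - 1) / s + 3 * (s - 1) ^ 2 / (2 * s * (s + 2)))
  have hφ1 : φ 1 = 0 := by simp [φ]
  have hcont : ∀ {a b : ℝ}, 0 < a → ContinuousOn φ (Set.Icc a b) := fun ha =>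
    fun s hs => (hasDerivAt_log_sub_pinskerBound (ha.trans_le hs.1)).continuousAt.continuousWithinAt
  have hderiv : ∀ {a b : ℝ}, 0 < a → ∀ s ∈ interior (Set.Icc a b),
      HasDerivWithinAt φ ((s - 1) ^ 3 / (s ^ 2 * (s + 2) ^ 2)) (interior (Set.Icc a b)) s := by
    intro a b ha s hs
    rw [interior_Icc] at hs
    exact (hasDerivAt_log_sub_pinskerBound (ha.trans hs.1)).hasDerivWithinAt
  suffices 0 ≤ φ t by simpa [φ, sub_nonneg] using this
  rcases le_total t 1 with h | h
  · refine hφ1 ▸ antitoneOn_of_hasDerivWithinAt_nonpos (convex_Icc t 1) (hcont ht)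
      (hderiv ht) (fun s hs => ?_) ⟨le_rfl, h⟩ ⟨h, le_rfl⟩ h
    rw [interior_Icc] at hs
    exact div_nonpos_of_nonpos_of_nonneg (Odd.pow_nonpos (by decide) (by linarith [hs.2]))
      (by positivity)
  · refine hφ1 ▸ monotoneOn_of_hasDerivWithinAt_nonneg (convex_Icc 1 t) (hcont one_pos)
      (hderiv one_pos) (fun s hs => ?_) ⟨le_rfl, h⟩ ⟨h, le_rfl⟩ h
    rw [interior_Icc] at hs
    exact div_nonneg (pow_nonneg (by linarith [hs.1]) _) (by positivity)

lemma three_mul_sq_div_le_klFun {t : ℝ} (ht : 0 ≤ t) :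
    3 * (t - 1) ^ 2 / (2 * (t + 2)) ≤ klFun t := by
  rcases ht.eq_or_lt with rfl | ht
  · norm_num [klFun_zero]
  have h := mul_le_mul_of_nonneg_left (pinskerBound_le_log ht) ht.le
  rw [klFun_apply]
  have : t * ((t - 1) / t + 3 * (t - 1) ^ 2 / (2 * t * (t + 2)))
      = t - 1 + 3 * (t - 1) ^ 2 / (2 * (t + 2)) := by field_simp
  linarith

lemma klFin_eq_sum_mul_klFun {A : Type*} [Fintype A] {p q : A → ℝ}
    (hp : ∑ a, p a = 1) (hq0 : ∀ a, 0 < q a) (hq1 : ∑ a, q a = 1) :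
    klFin p q = ∑ a, q a * klFun (p a / q a) := by
  have h : ∀ a, q a * klFun (p a / q a) = p a * Real.log (p a / q a) + q a - p a := fun a => by
    have := (hq0 a).ne'
    rw [klFun_apply]
    field_simp
  simp only [h, sum_sub_distrib, sum_add_distrib, hp, hq1, klFin, add_sub_cancel_right]

-- Pinsker's inequality: Sedrakyan's lemma with the weights `p + 2 q`, which sum to `3`.
theorem sq_sum_abs_sub_le_two_mul_klFin {A : Type*} [Fintype A] {p q : A → ℝ}
    (hp : p ∈ stdSimplex ℝ A) (hq0 : ∀ a, 0 < q a) (hq1 : ∑ a, q a = 1) :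
    (∑ a, |p a - q a|) ^ 2 ≤ 2 * klFin p q := by
  have hweights : ∑ a, (p a + 2 * q a) = 3 := by
    rw [sum_add_distrib, ← mul_sum, hp.2, hq1]; norm_num
  have hterm (a : A) : |p a - q a| ^ 2 / (p a + 2 * q a) ≤ 2 / 3 * (q a * klFun (p a / q a)) := by
    have h := mul_le_mul_of_nonneg_left
      (three_mul_sq_div_le_klFun (div_nonneg (hp.1 a) (hq0 a).le)) (hq0 a).le
    have : q a * (3 * (p a / q a - 1) ^ 2 / (2 * (p a / q a + 2)))
        = 3 / 2 * (|p a - q a| ^ 2 / (p a + 2 * q a)) := by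
      have := (hq0 a).ne'
      rw [sq_abs]
      field_simp
    linarith
  have hsedrakyan := sq_sum_div_le_sum_sq_div univ (fun a => |p a - q a|)
    fun a _ => (by linarith [hp.1 a, hq0 a] : 0 < p a + 2 * q a)
  rw [hweights, div_le_iff₀' three_pos] at hsedrakyan
  rw [klFin_eq_sum_mul_klFun hp.2 hq0 hq1]
  calc (∑ a, |p a - q a|) ^ 2 ≤ 3 * ∑ a, |p a - q a| ^ 2 / (p a + 2 * q a) := hsedrakyan
    _ ≤ 3 * ∑ a, 2 / 3 * (q a * klFun (p a / q a)) := by gcongr with a; exact hterm a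
    _ = 2 * ∑ a, q a * klFun (p a / q a) := by rw [← mul_sum]; ring

noncomputable def stepExpect {Z A : Type*} [Fintype A] (F : Z × A → Z) (μ : Z → A → ℝ)
    (f : Z → ℝ) (z : Z) : ℝ :=
  ∑ a, μ z a * f (F (z, a))

section MarkovOperator

variable {Z A : Type*} [Fintype A] {F : Z × A → Z} {μ : Z → A → ℝ}

lemma abs_stepExpect_le (hμ : ∀ z, μ z ∈ stdSimplex ℝ A) {f : Z → ℝ} {c : ℝ}
    (hf : ∀ z, |f z| ≤ c) (z : Z) : |stepExpect F μ f z| ≤ c := by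
  have h := abs_sum_mul_le (μ z) fun a => hf (F (z, a))
  simp only [abs_of_nonneg ((hμ z).1 _), (hμ z).2, one_mul] at h
  exact h

variable [Fintype Z]

lemma sum_stepDist_mul [DecidableEq Z] (ρ f : Z → ℝ) :
    ∑ z, stepDist F μ ρ z * f z = ∑ z, ρ z * stepExpect F μ f z := by
  simp only [stepDist, stepExpect, sum_mul, mul_sum, mul_ite, mul_one, mul_zero, ite_mul,
    zero_mul]
  rw [sum_comm]
  refine sum_congr rfl fun z _ => ?_
  rw [sum_comm]
  simp [mul_assoc]

lemma mapsTo_stepDist_stdSimplex [DecidableEq Z] (hμ : ∀ z, μ z ∈ stdSimplex ℝ A) :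
    Set.MapsTo (stepDist F μ) (stdSimplex ℝ Z) (stdSimplex ℝ Z) := by
  refine fun ρ hρ => ⟨fun z' => sum_nonneg fun z _ => mul_nonneg (hρ.1 z) <|
    sum_nonneg fun a _ => mul_nonneg ((hμ z).1 a) (by positivity), ?_⟩
  simpa [stepExpect, (hμ _).2, hρ.2] using sum_stepDist_mul (F := F) (μ := μ) ρ fun _ => 1

lemma abs_le_of_bellman (hμ : ∀ z, μ z ∈ stdSimplex ℝ A) {γ : ℝ} (hγ0 : 0 ≤ γ) (hγ1 : γ < 1)
    {D g : Z → ℝ} {c : ℝ} (hg : ∀ z, |g z| ≤ c)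
    (hD : ∀ z, D z = g z + γ * stepExpect F μ D z) (z : Z) : |D z| ≤ c / (1 - γ) := by
  have : Nonempty Z := ⟨z⟩
  obtain ⟨z₀, hz₀⟩ := Finite.exists_max fun z => |D z|
  have hmax : |D z₀| ≤ c + γ * |D z₀| :=
    calc |D z₀| ≤ |g z₀| + γ * |stepExpect F μ D z₀| := by
          rw [hD z₀]
          exact (abs_add_le _ _).trans_eq (by rw [abs_mul, abs_of_nonneg hγ0])
      _ ≤ c + γ * |D z₀| :=
          add_le_add (hg z₀) (mul_le_mul_of_nonneg_left (abs_stepExpect_le hμ hz₀ z₀) hγ0)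
  rw [le_div_iff₀ (sub_pos.2 hγ1)]
  nlinarith [hz₀ z]

variable [DecidableEq Z] {γ : ℝ} {ρ : Z → ℝ}

lemma summable_pow_mul_iterate_stepDist (hγ0 : 0 ≤ γ) (hγ1 : γ < 1)
    (hμ : ∀ z, μ z ∈ stdSimplex ℝ A) (hρ : ρ ∈ stdSimplex ℝ Z) (z : Z) :
    Summable fun t => γ ^ t * (stepDist F μ)^[t] ρ z := by
  have hν := fun t =>
    mem_Icc_of_mem_stdSimplex ((mapsTo_stepDist_stdSimplex (F := F) hμ).iterate t hρ) z
  refine (summable_geometric_of_lt_one hγ0 hγ1).of_nonneg_of_le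
    (fun t => mul_nonneg (pow_nonneg hγ0 t) (hν t).1) fun t => ?_
  exact mul_le_of_le_one_right (pow_nonneg hγ0 t) (hν t).2

lemma sum_occupancy_mul (hγ0 : 0 ≤ γ) (hγ1 : γ < 1) (hμ : ∀ z, μ z ∈ stdSimplex ℝ A)
    (hρ : ρ ∈ stdSimplex ℝ Z) (f : Z → ℝ) :
    ∑ z, occupancy F γ μ ρ z * f z
      = (1 - γ) * ∑' t, γ ^ t * ∑ z, (stepDist F μ)^[t] ρ z * f z := by
  simp only [occupancy, mul_assoc, ← mul_sum, ← tsum_mul_right]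
  rw [← Summable.tsum_finsetSum fun z _ => by simpa only [mul_assoc] using
    (summable_pow_mul_iterate_stepDist hγ0 hγ1 hμ hρ z).mul_right (f z)]
  simp only [mul_sum]

lemma occupancy_mem_stdSimplex (hγ0 : 0 ≤ γ) (hγ1 : γ < 1) (hμ : ∀ z, μ z ∈ stdSimplex ℝ A)
    (hρ : ρ ∈ stdSimplex ℝ Z) : occupancy F γ μ ρ ∈ stdSimplex ℝ Z := by
  refine ⟨fun z => mul_nonneg (sub_nonneg.2 hγ1.le) (tsum_nonneg fun t => mul_nonneg
    (pow_nonneg hγ0 t) (((mapsTo_stepDist_stdSimplex hμ).iterate t hρ).1 z)), ?_⟩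
  have h := sum_occupancy_mul (F := F) hγ0 hγ1 hμ hρ fun _ => 1
  simp only [mul_one, ((mapsTo_stepDist_stdSimplex hμ).iterate _ hρ).2,
    tsum_geometric_of_lt_one hγ0 hγ1] at h
  rw [h, mul_inv_cancel₀ (sub_pos.2 hγ1).ne']

theorem sum_occupancy_mul_eq_of_bellman (hγ0 : 0 ≤ γ) (hγ1 : γ < 1)
    (hμ : ∀ z, μ z ∈ stdSimplex ℝ A) (hρ : ρ ∈ stdSimplex ℝ Z) {D g : Z → ℝ}
    (hD : ∀ z, D z = g z + γ * stepExpect F μ D z) :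
    ∑ z, occupancy F γ μ ρ z * g z = (1 - γ) * ∑ z, ρ z * D z := by
  set a : ℕ → ℝ := fun t => ∑ z, (stepDist F μ)^[t] ρ z * D z
  have htelescope : ∀ t, γ ^ t * ∑ z, (stepDist F μ)^[t] ρ z * g z
      = γ ^ t * a t - γ ^ (t + 1) * a (t + 1) := fun t => by
    have hg : ∀ z, g z = D z - γ * stepExpect F μ D z := fun z => by rw [hD z]; ring
    simp only [a, hg, mul_sub, sum_sub_distrib, Function.iterate_succ_apply',
      sum_stepDist_mul, pow_succ, mul_left_comm _ γ, ← mul_sum]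
    ring
  have hsummable : Summable fun t => γ ^ t * a t := by
    simp only [a, mul_sum, ← mul_assoc]
    exact summable_sum fun z _ =>
      (summable_pow_mul_iterate_stepDist hγ0 hγ1 hμ hρ z).mul_right (D z)
  rw [sum_occupancy_mul hγ0 hγ1 hμ hρ, tsum_congr htelescope, tsum_sub_succ hsummable]
  simp [a]

end MarkovOperator

def qValue {Z A : Type*} (F : Z × A → Z) (R : Z × A → ℝ) (γ : ℝ) (V : Z → ℝ) (z : Z) (a : A) :
    ℝ :=
  R (z, a) + γ * V (F (z, a))

section ValueFunctions

variable {Z A : Type*} [Fintype A] {F : Z × A → Z} {R : Z × A → ℝ} {γ : ℝ} {π β : Z → A → ℝ}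
  {V W : Z → ℝ}

lemma sub_eq_bellman (hV : ∀ z, V z = ∑ a, π z a * qValue F R γ V z a)
    (hW : ∀ z, W z = ∑ a, β z a * qValue F R γ W z a) (z : Z) :
    (V - W) z = ∑ a, (π z a - β z a) * qValue F R γ V z a + γ * stepExpect F β (V - W) z := by
  rw [Pi.sub_apply, hV z, hW z]
  simp only [stepExpect, qValue, Pi.sub_apply, mul_sum, ← sum_add_distrib, ← sum_sub_distrib]
  exact sum_congr rfl fun a _ => by ring

theorem performance_difference [Fintype Z] [DecidableEq Z] (hγ0 : 0 ≤ γ) (hγ1 : γ < 1)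
    (hβ : ∀ z, β z ∈ stdSimplex ℝ A) {ρ : Z → ℝ} (hρ : ρ ∈ stdSimplex ℝ Z)
    (hV : ∀ z, V z = ∑ a, π z a * qValue F R γ V z a)
    (hW : ∀ z, W z = ∑ a, β z a * qValue F R γ W z a) :
    (1 - γ) * (∑ z, ρ z * V z - ∑ z, ρ z * W z)
      = ∑ z, occupancy F γ β ρ z * ∑ a, (π z a - β z a) * qValue F R γ V z a := by
  rw [sum_occupancy_mul_eq_of_bellman hγ0 hγ1 hβ hρ (sub_eq_bellman hV hW), ← sum_sub_distrib]
  simp only [Pi.sub_apply, mul_sub]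

lemma abs_value_sub_le [Fintype Z] (hγ0 : 0 ≤ γ) (hγ1 : γ < 1) (hπ : ∀ z, π z ∈ stdSimplex ℝ A)
    (hV : ∀ z, V z = ∑ a, π z a * qValue F R γ V z a)
    (hW : ∀ z, W z = ∑ a, β z a * qValue F R γ W z a)
    {Qmax L : ℝ} (hQmax0 : 0 ≤ Qmax) (hQmax : ∀ z a, |qValue F R γ W z a| ≤ Qmax)
    (hTV : ∀ z, ∑ a, |π z a - β z a| ≤ L) (z : Z) :
    |V z - W z| ≤ L * Qmax / (1 - γ) := by
  have hadv : ∀ z, |∑ a, (β z a - π z a) * qValue F R γ W z a| ≤ L * Qmax := fun z =>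
    (abs_sum_mul_le _ (hQmax z)).trans <| mul_le_mul_of_nonneg_right
      ((sum_congr rfl fun a _ => abs_sub_comm _ _).trans_le (hTV z)) hQmax0
  rw [abs_sub_comm]
  exact abs_le_of_bellman hπ hγ0 hγ1 hadv (sub_eq_bellman hW hV) z

lemma surrogate_sub_le_advantage {Qhat : Z × A → ℝ} {δ M : ℝ} (hγ0 : 0 ≤ γ)
    (hQhat : ∀ z a, |qValue F R γ W z a - Qhat (z, a)| ≤ δ) (hM : ∀ z, |V z - W z| ≤ M) (z : Z) :
    ∑ a, π z a * Qhat (z, a) - ∑ a, β z a * Qhat (z, a) - (∑ a, |π z a - β z a|) * (δ + γ * M)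
      ≤ ∑ a, (π z a - β z a) * qValue F R γ V z a := by
  have herr : ∀ a, |qValue F R γ V z a - Qhat (z, a)| ≤ δ + γ * M := fun a => by
    have : qValue F R γ V z a - Qhat (z, a)
        = (qValue F R γ W z a - Qhat (z, a)) + γ * (V (F (z, a)) - W (F (z, a))) := by
      simp only [qValue]; ring
    rw [this]
    refine (abs_add_le _ _).trans (add_le_add (hQhat z a) ?_)
    rw [abs_mul, abs_of_nonneg hγ0]
    exact mul_le_mul_of_nonneg_left (hM _) hγ0
  have hsplit : ∑ a, (π z a - β z a) * qValue F R γ V z a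
      = ∑ a, π z a * Qhat (z, a) - ∑ a, β z a * Qhat (z, a)
        + ∑ a, (π z a - β z a) * (qValue F R γ V z a - Qhat (z, a)) := by
    rw [← sum_sub_distrib, ← sum_add_distrib]
    exact sum_congr rfl fun a _ => by ring
  rw [hsplit]
  linarith [(abs_le.1 (abs_sum_mul_le (fun a => π z a - β z a) herr)).1]

end ValueFunctions

theorem policy_improvement_lower_bound_general
    {Z A : Type*} [Fintype Z] [Fintype A] [Nonempty Z] [DecidableEq Z]
    (F : Z × A → Z) (R : Z × A → ℝ) (γ : ℝ) (hγ0 : 0 < γ) (hγ1 : γ < 1)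
    (π β : Z → A → ℝ)
    (hπ0 : ∀ z a, 0 ≤ π z a) (hπ1 : ∀ z, ∑ a : A, π z a = 1)
    (hβ0 : ∀ z a, 0 < β z a) (hβ1 : ∀ z, ∑ a : A, β z a = 1)
    (ρ : Z → ℝ) (hρ0 : ∀ z, 0 ≤ ρ z) (hρ1 : ∑ z : Z, ρ z = 1)
    (Vπ Vβ : Z → ℝ)
    (hVπ : ∀ z, Vπ z = ∑ a : A, π z a * (R (z, a) + γ * Vπ (F (z, a))))
    (hVβ : ∀ z, Vβ z = ∑ a : A, β z a * (R (z, a) + γ * Vβ (F (z, a))))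
    (Qhat : Z × A → ℝ) (Qmax δ ε : ℝ)
    (hQmax : ∀ z a, |R (z, a) + γ * Vβ (F (z, a))| ≤ Qmax)
    (hQhat : ∀ z a, |(R (z, a) + γ * Vβ (F (z, a))) - Qhat (z, a)| ≤ δ)
    (hKL : ∀ z, klFin (π z) (β z) ≤ ε) :
    (∑ z : Z, ρ z * Vπ z) - (∑ z : Z, ρ z * Vβ z) ≥
      (1 / (1 - γ)) *
          ((∑ z : Z, occupancy F γ β ρ z * ∑ a : A, π z a * Qhat (z, a)) -
            (∑ z : Z, occupancy F γ β ρ z * ∑ a : A, β z a * Qhat (z, a)))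
        - (2 * γ * Qmax / (1 - γ) ^ 2) * ε - (2 / (1 - γ)) * δ := by
  have hπ : ∀ z, π z ∈ stdSimplex ℝ A := fun z => ⟨hπ0 z, hπ1 z⟩
  have hβ : ∀ z, β z ∈ stdSimplex ℝ A := fun z => ⟨fun a => (hβ0 z a).le, hβ1 z⟩
  have hpinsker z := (sq_sum_abs_sub_le_two_mul_klFin (hπ z) (hβ0 z) (hβ1 z)).trans
    (mul_le_mul_of_nonneg_left (hKL z) zero_le_two)
  obtain ⟨z₀⟩ := ‹Nonempty Z›
  obtain ⟨a₀, -, -⟩ := exists_ne_zero_of_sum_ne_zero ((hβ1 z₀).trans_ne one_ne_zero)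
  have hε : 0 ≤ ε := by nlinarith [hpinsker z₀, sq_nonneg (∑ a, |π z₀ a - β z₀ a|)]
  have hδ : 0 ≤ δ := (abs_nonneg _).trans (hQhat z₀ a₀)
  have hQmax0 : 0 ≤ Qmax := (abs_nonneg _).trans (hQmax z₀ a₀)
  set L := √(2 * ε)
  have hL : L * L = 2 * ε := Real.mul_self_sqrt (by positivity)
  have hTV z : ∑ a, |π z a - β z a| ≤ L := Real.le_sqrt_of_sq_le (hpinsker z)
  have h1γ : 0 < 1 - γ := sub_pos.2 hγ1
  have hM := abs_value_sub_le hγ0.le hγ1 hπ hVπ hVβ hQmax0 hQmax hTV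
  have hadv z : ∑ a, π z a * Qhat (z, a) - ∑ a, β z a * Qhat (z, a)
      - (2 * δ + 2 * γ * Qmax * ε / (1 - γ)) ≤ ∑ a, (π z a - β z a) * qValue F R γ Vπ z a := by
    have hδ_term := mul_le_mul_of_nonneg_right (sum_abs_sub_le_two (hπ z) (hβ z)) hδ
    have hε_term := mul_le_mul_of_nonneg_right (hTV z)
      (by positivity : 0 ≤ γ * (L * Qmax / (1 - γ)))
    have hLL : L * (γ * (L * Qmax / (1 - γ))) = 2 * γ * Qmax * ε / (1 - γ) := by
      linear_combination γ * Qmax / (1 - γ) * hL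
    linarith [surrogate_sub_le_advantage (π := π) (β := β) hγ0.le hQhat hM z]
  have hlower := sum_mul_sub_le_of_mem_stdSimplex
    (occupancy_mem_stdSimplex (F := F) hγ0.le hγ1 hβ ⟨hρ0, hρ1⟩) hadv
  rw [← performance_difference hγ0.le hγ1 hβ ⟨hρ0, hρ1⟩ hVπ hVβ] at hlower
  refine le_of_mul_le_mul_left (le_trans (le_of_eq ?_) hlower) h1γ
  simp only [mul_sub, sum_sub_distrib]
  field_simp
  ring

/-- policy improvement lower bound: with
`Ĵ_β(π) = Σ_z d^β(z) Σ_a π(a|z) Q̂(z,a)` and `Ĵ(β) = Σ_z d^β(z) Σ_a β(a|z) Q̂(z,a)`,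
if `|Q^β| ≤ Q_max`, `|Q^β − Q̂| ≤ δ` and `D_KL(π(·|z)‖β(·|z)) ≤ ε` for all `z`, then
`J(π) − J(β) ≥ (1/(1−γ))·(Ĵ_β(π) − Ĵ(β)) − (2γ Q_max/(1−γ)²)·ε − (2/(1−γ))·δ`.
Here `Q^β(z,a) = R(z,a) + γ·V^β(F(z,a))` and `Vπ, Vβ` are characterized by their
Bellman fixed-point equations, and `J(μ) = Σ_z ρ(z)·V^μ(z)`. -/
theorem policy_improvement_lower_bound
    {Z A : Type*} [Fintype Z] [Fintype A] [Nonempty Z] [Nonempty A] [DecidableEq Z]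
    (F : Z × A → Z) (R : Z × A → ℝ) (γ : ℝ) (hγ0 : 0 < γ) (hγ1 : γ < 1)
    (π β : Z → A → ℝ)
    (hπ0 : ∀ z a, 0 ≤ π z a) (hπ1 : ∀ z, ∑ a : A, π z a = 1)
    (hβ0 : ∀ z a, 0 < β z a) (hβ1 : ∀ z, ∑ a : A, β z a = 1)
    (ρ : Z → ℝ) (hρ0 : ∀ z, 0 ≤ ρ z) (hρ1 : ∑ z : Z, ρ z = 1)
    (Vπ Vβ : Z → ℝ)
    (hVπ : ∀ z, Vπ z = ∑ a : A, π z a * (R (z, a) + γ * Vπ (F (z, a))))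
    (hVβ : ∀ z, Vβ z = ∑ a : A, β z a * (R (z, a) + γ * Vβ (F (z, a))))
    (Qhat : Z × A → ℝ) (Qmax δ ε : ℝ)
    (hQmax : ∀ z a, |R (z, a) + γ * Vβ (F (z, a))| ≤ Qmax)
    (hQhat : ∀ z a, |(R (z, a) + γ * Vβ (F (z, a))) - Qhat (z, a)| ≤ δ)
    (hKL : ∀ z, klFin (π z) (β z) ≤ ε) :
    (∑ z : Z, ρ z * Vπ z) - (∑ z : Z, ρ z * Vβ z) ≥
      (1 / (1 - γ)) *
          ((∑ z : Z, occupancy F γ β ρ z * ∑ a : A, π z a * Qhat (z, a)) -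
            (∑ z : Z, occupancy F γ β ρ z * ∑ a : A, β z a * Qhat (z, a)))
        - (2 * γ * Qmax / (1 - γ) ^ 2) * ε - (2 / (1 - γ)) * δ :=
  policy_improvement_lower_bound_general F R γ hγ0 hγ1 π β hπ0 hπ1 hβ0 hβ1 ρ hρ0 hρ1 Vπ Vβ hVπ hVβ
    Qhat Qmax δ ε hQmax hQhat hKL
end

section
/- Let ρ : ℝ → ℝ be a bounded measurable function with ρ ≥ 0, compact support, and ∫ ρ(y) dy = 1 (a probability density), and let ᾱ ∈ (0,1). Define p(x) = ∫ gauss(√ᾱ·y, 1−ᾱ, x) · ρ(y) dy, and for each x ∈ ℝ let q_x denote the Gaussian probability measure on ℝ with mean x/√ᾱ and variance (1−ᾱ)/ᾱ. Then for every x ∈ ℝ: ∫ ρ dq_x > 0, p(x) > 0, p is differentiable at x, and p'(x)/p(x) = −x/(1−ᾱ) + (√ᾱ/(1−ᾱ)) · (∫ y·ρ(y) dq_x(y)) / (∫ ρ(y) dq_x(y)). -/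
/-!
The proposal density is a rescaled heat kernel,
`gaussianPDFReal (x/√ᾱ) ((1-ᾱ)/ᾱ) y = √ᾱ · gauss(√ᾱ y, 1-ᾱ, x)`, so both proposal integrals are
`√ᾱ` times integrals against the Gaussian mixture defining `p`. Since `t ↦ t e^{-t²}` is bounded,
`p` can be differentiated under the integral sign with a dominating multiple of `|ρ|`, and
`p'(x) = ∫ -(x - √ᾱ y)/(1-ᾱ) · gauss(√ᾱ y, 1-ᾱ, x) ρ(y) dy` is a linear combination of `p(x)` and
the first moment. Positivity of `p` holds because the Gaussian is positive and `ρ ≥ 0` is not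
a.e. zero.
-/

open MeasureTheory ProbabilityTheory

/-- Density at `x` of the one-dimensional normal distribution with mean `m`
and variance `v`: `gauss(m, v, x) = (2πv)^(−1/2) · exp(−(x − m)²/(2v))`. -/
noncomputable def gauss (m v x : ℝ) : ℝ :=
  (Real.sqrt (2 * Real.pi * v))⁻¹ * Real.exp (-(x - m) ^ 2 / (2 * v))

/-- The smoothed density `p(x) = ∫ gauss(√ᾱ·y, 1−ᾱ, x) · ρ(y) dy`. -/
noncomputable def smoothedDensityFn (ρ : ℝ → ℝ) (α : ℝ) (x : ℝ) : ℝ :=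
  ∫ y, gauss (Real.sqrt α * y) (1 - α) x * ρ y

/-- The Gaussian proposal measure `q_x` with mean `x/√ᾱ` and variance `(1−ᾱ)/ᾱ`. -/
noncomputable def proposal (α x : ℝ) : Measure ℝ :=
  gaussianReal (x / Real.sqrt α) (Real.toNNReal ((1 - α) / α))

section Gauss

variable {v : ℝ}

lemma gauss_pos (m : ℝ) (hv : 0 < v) (x : ℝ) : 0 < gauss m v x := by
  have := Real.pi_pos
  unfold gauss
  positivity

lemma gauss_le (m : ℝ) (hv : 0 < v) (x : ℝ) : gauss m v x ≤ (Real.sqrt (2 * Real.pi * v))⁻¹ := by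
  refine mul_le_of_le_one_right (by positivity) (Real.exp_le_one_iff.2 ?_)
  exact div_nonpos_of_nonpos_of_nonneg (neg_nonpos.2 (sq_nonneg _)) (by positivity)

lemma hasDerivAt_gauss (m v x : ℝ) :
    HasDerivAt (gauss m v) (-((x - m) / v) * gauss m v x) x := by
  have h := ((((hasDerivAt_id' x).sub_const m).pow 2).neg.div_const (2 * v)).exp.const_mul
    (Real.sqrt (2 * Real.pi * v))⁻¹
  refine (h : HasDerivAt (gauss m v) _ x).congr_deriv ?_
  simp only [gauss, Pi.neg_apply, Pi.pow_apply]
  ring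

lemma abs_mul_exp_neg_sq_le_one (s : ℝ) : |s| * Real.exp (-s ^ 2) ≤ 1 := by
  have h : |s| ≤ Real.exp (s ^ 2) := by
    nlinarith [Real.add_one_le_exp (s ^ 2), abs_nonneg s, sq_abs s, sq_nonneg (|s| - 1)]
  calc |s| * Real.exp (-s ^ 2) ≤ Real.exp (s ^ 2) * Real.exp (-s ^ 2) := by gcongr
    _ = 1 := by rw [← Real.exp_add, add_neg_cancel, Real.exp_zero]

lemma abs_sub_div_mul_gauss_le (m : ℝ) (hv : 0 < v) (x : ℝ) :
    |(x - m) / v * gauss m v x| ≤ (Real.sqrt Real.pi * v)⁻¹ := by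
  set s := (x - m) / Real.sqrt (2 * v)
  have h2v : Real.sqrt (2 * v) ^ 2 = 2 * v := Real.sq_sqrt (by positivity)
  have hs : -(x - m) ^ 2 / (2 * v) = -s ^ 2 := by
    rw [div_pow, h2v, neg_div]
  have key : |(x - m) / v * gauss m v x|
      = (Real.sqrt Real.pi * v)⁻¹ * (|s| * Real.exp (-s ^ 2)) := by
    have hsq : Real.sqrt (2 * Real.pi * v) = Real.sqrt Real.pi * Real.sqrt (2 * v) := by
      rw [← Real.sqrt_mul Real.pi_pos.le]; ring_nf
    have h2v_pos : 0 < Real.sqrt (2 * v) := by positivity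
    have hpi : 0 < Real.sqrt Real.pi := Real.sqrt_pos.2 Real.pi_pos
    rw [gauss, hs, hsq, abs_mul, abs_mul, abs_of_pos (Real.exp_pos _), abs_div, abs_div,
      abs_of_pos hv, abs_of_pos (show 0 < (Real.sqrt Real.pi * Real.sqrt (2 * v))⁻¹ by positivity),
      abs_of_pos h2v_pos]
    field_simp
  rw [key]
  exact mul_le_of_le_one_right (by positivity) (abs_mul_exp_neg_sq_le_one s)

end Gauss

section GaussianMixture

variable {m ρ : ℝ → ℝ} {v : ℝ}

lemma measurable_gauss_comp (hm : Measurable m) (v x : ℝ) :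
    Measurable fun y => gauss (m y) v x := by
  unfold gauss
  fun_prop

lemma integrable_gauss_mul (hm : Measurable m) (hv : 0 < v) (hρ : Integrable ρ) (x : ℝ) :
    Integrable fun y => gauss (m y) v x * ρ y :=
  hρ.bdd_mul (measurable_gauss_comp hm v x).aestronglyMeasurable <| ae_of_all _ fun y => by
    rw [Real.norm_of_nonneg (gauss_pos _ hv x).le]
    exact gauss_le _ hv x

lemma integral_gauss_mul_pos (hm : Measurable m) (hv : 0 < v) (hnn : 0 ≤ ρ)
    (hρ : 0 < ∫ y, ρ y) (x : ℝ) : 0 < ∫ y, gauss (m y) v x * ρ y := by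
  have hρi : Integrable ρ := .of_integral_ne_zero hρ.ne'
  have hsupp : (Function.support fun y => gauss (m y) v x * ρ y) = Function.support ρ := by
    ext y
    simp [(gauss_pos (m y) hv x).ne']
  rw [integral_pos_iff_support_of_nonneg (fun y => mul_nonneg (gauss_pos _ hv x).le (hnn y))
    (integrable_gauss_mul hm hv hρi x), hsupp]
  exact (integral_pos_iff_support_of_nonneg hnn hρi).1 hρ

lemma hasDerivAt_integral_gauss_mul (hm : Measurable m) (hv : 0 < v) (hρ : Integrable ρ)
    (x : ℝ) :
    Integrable (fun y => -((x - m y) / v) * gauss (m y) v x * ρ y) ∧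
      HasDerivAt (fun x => ∫ y, gauss (m y) v x * ρ y)
        (∫ y, -((x - m y) / v) * gauss (m y) v x * ρ y) x := by
  refine hasDerivAt_integral_of_dominated_loc_of_deriv_le (bound := fun y =>
      (Real.sqrt Real.pi * v)⁻¹ * ‖ρ y‖) Filter.univ_mem
    (.of_forall fun x => (integrable_gauss_mul hm hv hρ x).aestronglyMeasurable)
    (integrable_gauss_mul hm hv hρ x) ?_ (ae_of_all _ fun y x' _ => ?_) (hρ.norm.const_mul _)
    (ae_of_all _ fun y x' _ => (hasDerivAt_gauss (m y) v x').mul_const (ρ y))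
  · have : Measurable fun y => -((x - m y) / v) := by fun_prop
    exact ((this.mul (measurable_gauss_comp hm v x)).aestronglyMeasurable).mul hρ.1
  · rw [norm_mul, neg_mul, norm_neg, Real.norm_eq_abs]
    gcongr
    exact abs_sub_div_mul_gauss_le _ hv x'

end GaussianMixture

lemma gaussianPDFReal_div_eq_mul_gauss {a v : ℝ} (ha : 0 < a) (hv : 0 ≤ v) (x y : ℝ) :
    gaussianPDFReal (x / a) (v / a ^ 2).toNNReal y = a * gauss (a * y) v x := by
  have hexp : -(y - x / a) ^ 2 / (2 * (v / a ^ 2)) = -(x - a * y) ^ 2 / (2 * v) := by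
    rcases hv.eq_or_lt with rfl | hv
    · simp
    · field_simp
      ring
  rw [gaussianPDFReal, Real.coe_toNNReal _ (by positivity), gauss, hexp,
    show 2 * Real.pi * (v / a ^ 2) = 2 * Real.pi * v / a ^ 2 by ring,
    Real.sqrt_div' _ (sq_nonneg a), Real.sqrt_sq ha.le, inv_div]
  ring

lemma integral_proposal {α : ℝ} (hα0 : 0 < α) (hα1 : α < 1) (x : ℝ) (g : ℝ → ℝ) :
    ∫ y, g y ∂(proposal α x) = Real.sqrt α * ∫ y, gauss (Real.sqrt α * y) (1 - α) x * g y := by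
  have hs : 0 < Real.sqrt α := Real.sqrt_pos.2 hα0
  have hvar : (1 - α) / α = (1 - α) / Real.sqrt α ^ 2 := by rw [Real.sq_sqrt hα0.le]
  rw [proposal, integral_gaussianReal_eq_integral_smul
    (Real.toNNReal_pos.2 (by bound)).ne', ← integral_const_mul, hvar]
  simp_rw [gaussianPDFReal_div_eq_mul_gauss hs (by linarith : (0 : ℝ) ≤ 1 - α), smul_eq_mul,
    mul_assoc]

theorem score_as_proposal_reweighting_general
    (ρ : ℝ → ℝ)
    (hnn : ∀ y, 0 ≤ ρ y)
    (hρ1 : ∫ y, ρ y = 1)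
    (α : ℝ) (hα0 : 0 < α) (hα1 : α < 1) (x : ℝ) :
    0 < ∫ y, ρ y ∂(proposal α x) ∧
      0 < smoothedDensityFn ρ α x ∧
      DifferentiableAt ℝ (smoothedDensityFn ρ α) x ∧
      deriv (smoothedDensityFn ρ α) x / smoothedDensityFn ρ α x =
        -x / (1 - α) + (Real.sqrt α / (1 - α)) *
          (∫ y, y * ρ y ∂(proposal α x)) / (∫ y, ρ y ∂(proposal α x)) := by
  have hρ : Integrable ρ := .of_integral_ne_zero (by simp [hρ1])
  have hv : 0 < 1 - α := by linarith
  have hs : 0 < Real.sqrt α := Real.sqrt_pos.2 hα0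
  have hm : Measurable fun y : ℝ => Real.sqrt α * y := measurable_const_mul _
  have hp : 0 < smoothedDensityFn ρ α x :=
    integral_gauss_mul_pos hm hv hnn (by simp [hρ1]) x
  obtain ⟨hderiv_int, hderiv⟩ := hasDerivAt_integral_gauss_mul hm hv hρ x
  replace hderiv : HasDerivAt (smoothedDensityFn ρ α) _ x := hderiv
  have hmoment : ∫ y, gauss (Real.sqrt α * y) (1 - α) x * (y * ρ y)
      = ((1 - α) * deriv (smoothedDensityFn ρ α) x + x * smoothedDensityFn ρ α x)
        / Real.sqrt α := by
    rw [hderiv.deriv, smoothedDensityFn, ← integral_const_mul, ← integral_const_mul,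
      ← integral_add (hderiv_int.const_mul _) ((integrable_gauss_mul hm hv hρ x).const_mul _),
      ← integral_div]
    congr 1 with y
    field_simp
    ring
  have hq : ∫ y, gauss (Real.sqrt α * y) (1 - α) x * ρ y = smoothedDensityFn ρ α x := rfl
  rw [integral_proposal hα0 hα1, integral_proposal hα0 hα1, hmoment, hq]
  refine ⟨mul_pos hs hp, hp, hderiv.differentiableAt, ?_⟩
  field_simp
  ring

/-- for a bounded, nonnegative, compactly supported probability
density `ρ` and `ᾱ ∈ (0,1)`, the smoothed density `p` is positive and differentiable
everywhere, `∫ ρ dq_x > 0`, and the score satisfies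
`p'(x)/p(x) = −x/(1−ᾱ) + (√ᾱ/(1−ᾱ)) · (∫ y·ρ(y) dq_x(y)) / (∫ ρ(y) dq_x(y))`. -/
theorem score_as_proposal_reweighting
    (ρ : ℝ → ℝ) (hmeas : Measurable ρ) (hbdd : ∃ C, ∀ y, |ρ y| ≤ C)
    (hnn : ∀ y, 0 ≤ ρ y) (hcs : HasCompactSupport ρ)
    (hρ1 : ∫ y, ρ y = 1)
    (α : ℝ) (hα0 : 0 < α) (hα1 : α < 1) (x : ℝ) :
    0 < ∫ y, ρ y ∂(proposal α x) ∧
      0 < smoothedDensityFn ρ α x ∧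
      DifferentiableAt ℝ (smoothedDensityFn ρ α) x ∧
      deriv (smoothedDensityFn ρ α) x / smoothedDensityFn ρ α x =
        -x / (1 - α) + (Real.sqrt α / (1 - α)) *
          (∫ y, y * ρ y ∂(proposal α x)) / (∫ y, ρ y ∂(proposal α x)) :=
  score_as_proposal_reweighting_general ρ hnn hρ1 α hα0 hα1 x
end
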